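/- arXiv:2202.06319 — 2 statements merged into one kernel-verified Lean document; each statement's English description precedes it below -/
import Mathlib

section
/- Let G be a finite group acting on ℝ^m, let X ⊆ ℝ^m be a finite nonempty G-invariant set (g•x ∈ X for all g ∈ G and x ∈ X), and let F be a convex set of functions f : X → ℝ^m such that for every f ∈ F and g ∈ G the conjugated function x ↦ g•f(g⁻¹•x) also belongs to F. Let L_metric : ℝ^m × X → ℝ satisfy: (1) L_metric(g•a, g•x) = L_metric(a, x) for all g ∈ G, a ∈ ℝ^m, x ∈ X; and (2) for each x ∈ X, the map a ↦ L_metric(a, x) is strictly convex on ℝ^m. Define the loss 𝓛(f) = Σ_{x∈X} L_metric(f(x), x). Then every global minimizer f* ∈ F of 𝓛 over F is G-equivariant on X, i.e. f*(g•x) = g•f*(x) for all g ∈ G and x ∈ X. -/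
theorem stmt4 (m : ℕ) (G : Type) [Group G] [Finite G]
    [MulAction G (Fin m → ℝ)]
    (X : Finset (Fin m → ℝ)) (hXne : X.Nonempty)
    (hXinv : ∀ (g : G) (x : Fin m → ℝ), x ∈ X → g • x ∈ X)
    (F : Set ({x // x ∈ X} → (Fin m → ℝ)))
    (hFconv : Convex ℝ F)
    (hFconj : ∀ f ∈ F, ∀ g : G,
      (fun x : {x // x ∈ X} => g • f ⟨g⁻¹ • x.1, hXinv g⁻¹ x.1 x.2⟩) ∈ F)
    (Lm : (Fin m → ℝ) → {x // x ∈ X} → ℝ)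
    (hLinv : ∀ (g : G) (a : Fin m → ℝ) (x : {x // x ∈ X}),
      Lm (g • a) ⟨g • x.1, hXinv g x.1 x.2⟩ = Lm a x)
    (hLsc : ∀ x : {x // x ∈ X},
      StrictConvexOn ℝ (Set.univ : Set (Fin m → ℝ)) (fun a => Lm a x))
    (fstar : {x // x ∈ X} → (Fin m → ℝ)) (hfF : fstar ∈ F)
    (hmin : ∀ f ∈ F,
      (∑ x : {x // x ∈ X}, Lm (fstar x) x) ≤ ∑ x : {x // x ∈ X}, Lm (f x) x) :
    ∀ (g : G) (x : {x // x ∈ X}),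
      fstar ⟨g • x.1, hXinv g x.1 x.2⟩ = g • fstar x := by
  intro g x
  set fg : {x // x ∈ X} → (Fin m → ℝ) :=
    fun y => g • fstar ⟨g⁻¹ • y.1, hXinv g⁻¹ y.1 y.2⟩ with hfg
  have hfgF : fg ∈ F := hFconj fstar hfF g
  -- the equiv y ↦ g • y on the subtype
  let σ : {x // x ∈ X} ≃ {x // x ∈ X} :=
    { toFun := fun y => ⟨g • y.1, hXinv g y.1 y.2⟩
      invFun := fun y => ⟨g⁻¹ • y.1, hXinv g⁻¹ y.1 y.2⟩
      left_inv := fun y => by ext : 1; simp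
      right_inv := fun y => by ext : 1; simp }
  have hsum : ∑ y : {x // x ∈ X}, Lm (fg y) y = ∑ y : {x // x ∈ X}, Lm (fstar y) y := by
    rw [← Equiv.sum_comp σ (fun y => Lm (fg y) y)]
    refine Finset.sum_congr rfl fun y _ => ?_
    show Lm (fg ⟨g • y.1, _⟩) ⟨g • y.1, _⟩ = Lm (fstar y) y
    have hy : (⟨g⁻¹ • (g • y.1), hXinv g⁻¹ _ (hXinv g y.1 y.2)⟩ : {x // x ∈ X}) = y := by
      ext : 1; simp
    calc Lm (fg ⟨g • y.1, hXinv g y.1 y.2⟩) ⟨g • y.1, hXinv g y.1 y.2⟩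
        = Lm (g • fstar y) ⟨g • y.1, hXinv g y.1 y.2⟩ := by
          simp only [hfg]; rw [hy]
      _ = Lm (fstar y) y := hLinv g (fstar y) y
  have key : ∀ y, fstar y = fg y := by
    by_contra hne
    push_neg at hne
    obtain ⟨y0, hy0⟩ := hne
    set h : {x // x ∈ X} → (Fin m → ℝ) := (1/2 : ℝ) • fstar + (1/2 : ℝ) • fg with hh
    have hhF : h ∈ F := hFconv hfF hfgF (by norm_num) (by norm_num) (by norm_num)
    have hlt : ∑ y : {x // x ∈ X}, Lm (h y) y < ∑ y : {x // x ∈ X}, Lm (fstar y) y := by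
      have hle : ∀ y : {x // x ∈ X}, y ∈ (Finset.univ : Finset {x // x ∈ X}) →
          Lm (h y) y ≤ (1/2 : ℝ) * Lm (fstar y) y + (1/2 : ℝ) * Lm (fg y) y := by
        intro y _
        have := (hLsc y).convexOn.2 (Set.mem_univ (fstar y)) (Set.mem_univ (fg y))
          (by norm_num : (0:ℝ) ≤ 1/2) (by norm_num : (0:ℝ) ≤ 1/2) (by norm_num)
        simpa [hh, smul_eq_mul] using this
      have hstrict : Lm (h y0) y0 < (1/2 : ℝ) * Lm (fstar y0) y0 + (1/2 : ℝ) * Lm (fg y0) y0 := by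
        have := (hLsc y0).2 (Set.mem_univ (fstar y0)) (Set.mem_univ (fg y0)) hy0
          (by norm_num : (0:ℝ) < 1/2) (by norm_num : (0:ℝ) < 1/2) (by norm_num)
        simpa [hh, smul_eq_mul] using this
      calc ∑ y : {x // x ∈ X}, Lm (h y) y
          < ∑ y : {x // x ∈ X}, ((1/2 : ℝ) * Lm (fstar y) y + (1/2 : ℝ) * Lm (fg y) y) :=
            Finset.sum_lt_sum hle ⟨y0, Finset.mem_univ y0, hstrict⟩
        _ = (1/2 : ℝ) * (∑ y : {x // x ∈ X}, Lm (fstar y) y)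
            + (1/2 : ℝ) * (∑ y : {x // x ∈ X}, Lm (fg y) y) := by
            rw [Finset.sum_add_distrib, ← Finset.mul_sum, ← Finset.mul_sum]
        _ = ∑ y : {x // x ∈ X}, Lm (fstar y) y := by rw [hsum]; ring
    exact absurd (hmin h hhF) (not_le.mpr hlt)
  have := key ⟨g • x.1, hXinv g x.1 x.2⟩
  rw [this]
  simp only [hfg]
  congr 1
  ext : 1
  simp
end

section
/- Let H be a group and let a, r ∈ H satisfy r⁴ = 1 and a·r² = r²·a⁻¹. Then for every group homomorphism ψ from H to the group of 2×2 real orthogonal matrices, ψ(a)² = I, i.e. a² lies in the kernel of ψ. -/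
lemma scalar_of_sq_one_det_one (M : Matrix (Fin 2) (Fin 2) ℝ)
    (h1 : M * M = 1) (h2 : M.det = 1) : M = M 0 0 • (1 : Matrix (Fin 2) (Fin 2) ℝ) := by
  have e01 : (M * M) 0 1 = (1 : Matrix (Fin 2) (Fin 2) ℝ) 0 1 := by rw [h1]
  have e10 : (M * M) 1 0 = (1 : Matrix (Fin 2) (Fin 2) ℝ) 1 0 := by rw [h1]
  have e00 : (M * M) 0 0 = (1 : Matrix (Fin 2) (Fin 2) ℝ) 0 0 := by rw [h1]
  have e11 : (M * M) 1 1 = (1 : Matrix (Fin 2) (Fin 2) ℝ) 1 1 := by rw [h1]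
  simp [Matrix.mul_apply, Fin.sum_univ_two, Matrix.one_apply] at e01 e10 e00 e11
  rw [Matrix.det_fin_two] at h2
  have htr : M 0 0 + M 1 1 ≠ 0 := by
    intro h
    nlinarith [h2, e00]
  have hb : M 0 1 = 0 := by
    have : M 0 1 * (M 0 0 + M 1 1) = 0 := by ring_nf; linarith [e01]
    rcases mul_eq_zero.mp this with h | h
    · exact h
    · exact absurd h htr
  have hc : M 1 0 = 0 := by
    have : M 1 0 * (M 0 0 + M 1 1) = 0 := by ring_nf; linarith [e10]
    rcases mul_eq_zero.mp this with h | h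
    · exact h
    · exact absurd h htr
  have hd : M 1 1 = M 0 0 := by nlinarith [h2, e00, e11]
  ext i j
  fin_cases i <;> fin_cases j <;> simp [Matrix.one_apply, hb, hc, hd]

theorem stmt10 (H : Type*) [Group H] (a r : H)
    (hr : r ^ 4 = 1) (har : a * r ^ 2 = r ^ 2 * a⁻¹)
    (ψ : H →* Matrix.orthogonalGroup (Fin 2) ℝ) :
    ψ a ^ 2 = 1 ∧ a ^ 2 ∈ ψ.ker := by
  set S : Matrix.orthogonalGroup (Fin 2) ℝ := ψ r ^ 2 with hS
  have hSS : S * S = 1 := by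
    rw [hS, ← pow_add, ← map_pow, hr, map_one]
  have hA : ψ a * S = S * (ψ a)⁻¹ := by
    rw [hS, ← map_pow, ← map_mul, har, map_mul, map_pow, map_inv]
  -- underlying matrix of S
  have hM : (S : Matrix (Fin 2) (Fin 2) ℝ) * (S : Matrix (Fin 2) (Fin 2) ℝ) = 1 := by
    have := congrArg (Subtype.val) hSS
    simpa using this
  have hdetsq : (S : Matrix (Fin 2) (Fin 2) ℝ).det * (S : Matrix (Fin 2) (Fin 2) ℝ).det = 1 := by
    rw [← Matrix.det_mul, hM, Matrix.det_one]
  have hdetnn : 0 ≤ (S : Matrix (Fin 2) (Fin 2) ℝ).det := by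
    have : (S : Matrix (Fin 2) (Fin 2) ℝ) = (ψ r : Matrix (Fin 2) (Fin 2) ℝ) ^ 2 := by
      rw [hS]; simp
    rw [this, Matrix.det_pow]
    exact sq_nonneg _
  have hdet : (S : Matrix (Fin 2) (Fin 2) ℝ).det = 1 := by nlinarith
  have hscalar := scalar_of_sq_one_det_one _ hM hdet
  -- S commutes with ψ a
  have hcomm : S * ψ a = ψ a * S := by
    apply Subtype.ext
    push_cast
    rw [hscalar]
    simp [Matrix.smul_mul, Matrix.mul_smul]
  have hinv : ψ a = (ψ a)⁻¹ := by
    have : S * ψ a = S * (ψ a)⁻¹ := by rw [hcomm, hA]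
    exact mul_left_cancel this
  have h1 : ψ a ^ 2 = 1 := by
    rw [pow_two]; nth_rewrite 1 [hinv]; exact inv_mul_cancel _
  exact ⟨h1, by rw [MonoidHom.mem_ker, map_pow, h1]⟩
end
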